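/- Let (X,Y) and (X',Y') be random vectors with copulas C and C' respectively, where F_X, F_{X'}, F_Y, F_{Y'} are all continuous and F_Y = F_{Y'}. If CoVaR_{α,β}(Y|X) ≤ CoVaR_{α,β}(Y'|X') for all α, β ∈ (0,1), then C(u,v) ≤ C'(u,v) for all u,v ∈ (0,1). -/

import Mathlib

open MeasureTheory Set

/-- Generalized inverse (left-continuous quantile function) F^←(p) = inf {x : F x ≥ p}. -/
noncomputable def qf (F : ℝ → ℝ) (p : ℝ) : ℝ := sInf {x | p ≤ F x}

/-- Distribution function of a random variable. -/
noncomputable def rvCdf {Ω : Type*} [MeasurableSpace Ω] (μ : Measure Ω) (X : Ω → ℝ) (x : ℝ) : ℝ :=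
  (μ {ω | X ω ≤ x}).toReal

/-- CoVaR_{α,β}(Y|X): β-quantile of the conditional law of Y given {X ≥ VaR_α(X)}. -/
noncomputable def covar {Ω : Type*} [MeasurableSpace Ω] (μ : Measure Ω) (X Y : Ω → ℝ)
    (α β : ℝ) : ℝ :=
  qf (fun y => (μ ({ω | Y ω ≤ y} ∩ {ω | qf (rvCdf μ X) α ≤ X ω})).toReal /
        (μ {ω | qf (rvCdf μ X) α ≤ X ω}).toReal) β

/-!
When `F_X` is continuous, the event `{X ≥ VaR_u(X)}` has probability `1 - u`, and conditionally on
it `Y` has distribution function `y ↦ (F_Y(y) - C(u, F_Y(y))) / (1 - u)`, whose `β`-quantile is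
`CoVaR_{u,β}(Y|X)`. Pointwise ordered quantile functions force the reverse order of the distribution
functions, so `F_Y(y) - C'(u, F_Y(y)) ≤ F_Y(y) - C(u, F_Y(y))` for all `y`, and `F_Y = F_{Y'}`
takes every value in `(0, 1)` since it is continuous.
-/

open ProbabilityTheory Filter Topology

section Quantile

variable {F : ℝ → ℝ} {p x : ℝ}

lemma bddBelow_setOf_le_apply (hF : Monotone F) {a : ℝ} (ha : F a < p) :
    BddBelow {x | p ≤ F x} :=
  ⟨a, fun _ hy => not_lt.1 fun hya => (hF hya.le).not_gt (ha.trans_le hy)⟩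

lemma qf_le_of_le_apply (hF : Monotone F) {a : ℝ} (ha : F a < p) (hx : p ≤ F x) : qf F p ≤ x :=
  csInf_le (bddBelow_setOf_le_apply hF ha) hx

lemma lt_qf_of_apply_lt (hF : Monotone F) (hFx : ContinuousWithinAt F (Ici x) x)
    (hne : {y | p ≤ F y}.Nonempty) (hx : F x < p) : x < qf F p := by
  obtain ⟨z, hxz, hz⟩ : ∃ z, x < z ∧ F z < p :=
    (eventually_mem_nhdsWithin.and ((hFx.mono Ioi_subset_Ici_self).eventually_lt_const hx)).exists
  refine hxz.trans_le (le_csInf hne fun y hy => not_lt.1 fun hyz => ?_)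
  exact (hF hyz.le).not_gt (hz.trans_le hy)

lemma apply_qf_of_continuous (hF : Monotone F) (hFc : Continuous F)
    (h0 : Tendsto F atBot (𝓝 0)) (h1 : Tendsto F atTop (𝓝 1)) (hp : p ∈ Ioo (0 : ℝ) 1) :
    F (qf F p) = p := by
  obtain ⟨a, ha⟩ := (h0.eventually_lt_const hp.1).exists
  obtain ⟨b, hb⟩ := (h1.eventually_const_lt hp.2).exists
  obtain ⟨c, hc⟩ := intermediate_value_univ a b hFc ⟨ha.le, hb.le⟩
  refine le_antisymm ((hF (qf_le_of_le_apply hF ha hc.ge)).trans_eq hc) ?_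
  exact (isClosed_Ici.preimage hFc).csInf_mem ⟨c, hc.ge⟩ (bddBelow_setOf_le_apply hF ha)

end Quantile

theorem cdf_le_of_qf_cdf_le {ρ ρ' : Measure ℝ} [IsProbabilityMeasure ρ] [IsProbabilityMeasure ρ']
    (h : ∀ β ∈ Ioo (0 : ℝ) 1, qf (cdf ρ) β ≤ qf (cdf ρ') β) (y : ℝ) : cdf ρ' y ≤ cdf ρ y := by
  by_contra! hlt
  obtain ⟨β, hβ⟩ := exists_between hlt
  have hβ01 : β ∈ Ioo (0 : ℝ) 1 :=
    ⟨(cdf_nonneg ρ y).trans_lt hβ.1, hβ.2.trans_le (cdf_le_one ρ' y)⟩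
  obtain ⟨a, ha⟩ := ((tendsto_cdf_atBot ρ').eventually_lt_const hβ01.1).exists
  have hne : {x | β ≤ cdf ρ x}.Nonempty :=
    ((tendsto_cdf_atTop ρ).eventually_const_lt hβ01.2).exists.imp fun _ => le_of_lt
  have h' : qf (cdf ρ') β ≤ y := qf_le_of_le_apply (monotone_cdf ρ') ha hβ.2.le
  have hy : y < qf (cdf ρ) β :=
    lt_qf_of_apply_lt (monotone_cdf ρ) ((cdf ρ).right_continuous y) hne hβ.1
  linarith [h β hβ01]

lemma cdf_map_cond_apply {Ω : Type*} [MeasurableSpace Ω] {μ : Measure Ω} [IsFiniteMeasure μ]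
    {Y : Ω → ℝ} (hY : Measurable Y) {S : Set Ω} (hS : MeasurableSet S) (hμS : μ S ≠ 0) (y : ℝ) :
    cdf ((μ[|S]).map Y) y = μ.real ({ω | Y ω ≤ y} ∩ S) / μ.real S := by
  have := cond_isProbabilityMeasure (μ := μ) hμS
  have := Measure.isProbabilityMeasure_map (μ := μ[|S]) hY.aemeasurable
  rw [cdf_eq_real, map_measureReal_apply hY measurableSet_Iic, measureReal_def, cond_apply hS,
    ENNReal.toReal_mul, ENNReal.toReal_inv, inter_comm, div_eq_inv_mul]
  rfl

section RandomVariables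

variable {Ω : Type*} [MeasurableSpace Ω] {μ : Measure Ω} [IsProbabilityMeasure μ] {X Y : Ω → ℝ}

lemma rvCdf_eq_cdf_map (hX : Measurable X) : rvCdf μ X = cdf (μ.map X) := by
  have := Measure.isProbabilityMeasure_map (μ := μ) hX.aemeasurable
  ext x
  rw [cdf_eq_real, map_measureReal_apply hX measurableSet_Iic]
  rfl

lemma map_singleton_eq_zero_of_continuous_rvCdf (hX : Measurable X)
    (hc : Continuous (rvCdf μ X)) (x : ℝ) : μ.map X {x} = 0 := by
  have := Measure.isProbabilityMeasure_map (μ := μ) hX.aemeasurable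
  rw [← measure_cdf (μ.map X), StieltjesFunction.measure_singleton, ← rvCdf_eq_cdf_map hX,
    hc.continuousAt.continuousWithinAt.leftLim_eq, sub_self, ENNReal.ofReal_zero]

lemma measureReal_inter_le_eq_sub (hX : Measurable X) (hc : Continuous (rvCdf μ X)) (x : ℝ)
    (A : Set Ω) : μ.real (A ∩ {ω | x ≤ X ω}) = μ.real A - μ.real (A ∩ {ω | X ω ≤ x}) := by
  have hae : {ω | X ω < x} =ᵐ[μ] {ω | X ω ≤ x} :=
    ae_eq_comp hX.aemeasurable
      (Iio_ae_eq_Iic' (map_singleton_eq_zero_of_continuous_rvCdf hX hc x))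
  have hcompl : A \ {ω | X ω < x} = A ∩ {ω | x ≤ X ω} := by ext; simp
  have hsplit := measureReal_inter_add_sdiff (μ := μ) (s := A)
    (t := {ω | X ω < x}) (hX measurableSet_Iio)
  rw [measureReal_congr ((EventuallyEq.refl _ A).inter hae)] at hsplit
  rw [← hcompl]
  linarith

lemma rvCdf_qf_of_continuous (hX : Measurable X) (hc : Continuous (rvCdf μ X)) {u : ℝ}
    (hu : u ∈ Ioo (0 : ℝ) 1) : rvCdf μ X (qf (rvCdf μ X) u) = u := by
  have := Measure.isProbabilityMeasure_map (μ := μ) hX.aemeasurable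
  rw [rvCdf_eq_cdf_map hX] at hc ⊢
  exact apply_qf_of_continuous (monotone_cdf _) hc (tendsto_cdf_atBot _) (tendsto_cdf_atTop _) hu

lemma measureReal_setOf_qf_le (hX : Measurable X) (hc : Continuous (rvCdf μ X)) {u : ℝ}
    (hu : u ∈ Ioo (0 : ℝ) 1) : μ.real {ω | qf (rvCdf μ X) u ≤ X ω} = 1 - u := by
  have h := measureReal_inter_le_eq_sub hX hc (qf (rvCdf μ X) u) univ
  simp only [univ_inter, probReal_univ] at h
  exact h.trans (congrArg (1 - ·) (rvCdf_qf_of_continuous hX hc hu))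

/-- The conditional law of `Y` given `{X ≥ VaR_u(X)}`. -/
noncomputable def upperTailLaw (μ : Measure Ω) (X Y : Ω → ℝ) (u : ℝ) : Measure ℝ :=
  (μ[|{ω | qf (rvCdf μ X) u ≤ X ω}]).map Y

lemma measure_setOf_qf_le_ne_zero (hX : Measurable X) (hc : Continuous (rvCdf μ X)) {u : ℝ}
    (hu : u ∈ Ioo (0 : ℝ) 1) : μ {ω | qf (rvCdf μ X) u ≤ X ω} ≠ 0 := by
  have h := measureReal_setOf_qf_le hX hc hu
  intro h0
  rw [measureReal_def, h0, ENNReal.toReal_zero] at h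
  linarith [hu.2]

lemma isProbabilityMeasure_upperTailLaw (hX : Measurable X) (hY : Measurable Y)
    (hc : Continuous (rvCdf μ X)) {u : ℝ} (hu : u ∈ Ioo (0 : ℝ) 1) :
    IsProbabilityMeasure (upperTailLaw μ X Y u) :=
  have := cond_isProbabilityMeasure (measure_setOf_qf_le_ne_zero hX hc hu)
  Measure.isProbabilityMeasure_map hY.aemeasurable

lemma covar_eq_qf_cdf_upperTailLaw (hX : Measurable X) (hY : Measurable Y)
    (hc : Continuous (rvCdf μ X)) {u : ℝ} (hu : u ∈ Ioo (0 : ℝ) 1) :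
    covar μ X Y u = qf (cdf (upperTailLaw μ X Y u)) := by
  ext β
  unfold covar upperTailLaw
  congr 1
  ext y
  rw [cdf_map_cond_apply hY (measurableSet_le measurable_const hX)
    (measure_setOf_qf_le_ne_zero hX hc hu)]
  rfl

lemma cdf_upperTailLaw (hX : Measurable X) (hY : Measurable Y) (hc : Continuous (rvCdf μ X))
    {u : ℝ} (hu : u ∈ Ioo (0 : ℝ) 1) {C : ℝ → ℝ → ℝ}
    (hSklar : ∀ x y, (μ {ω | X ω ≤ x ∧ Y ω ≤ y}).toReal = C (rvCdf μ X x) (rvCdf μ Y y)) (y : ℝ) :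
    cdf (upperTailLaw μ X Y u) y = (rvCdf μ Y y - C u (rvCdf μ Y y)) / (1 - u) := by
  have hjoint := hSklar (qf (rvCdf μ X) u) y
  rw [rvCdf_qf_of_continuous hX hc hu] at hjoint
  rw [upperTailLaw, cdf_map_cond_apply hY (measurableSet_le measurable_const hX)
    (measure_setOf_qf_le_ne_zero hX hc hu),
    measureReal_inter_le_eq_sub hX hc, measureReal_setOf_qf_le hX hc hu, inter_comm, ← hjoint]
  rfl

end RandomVariables

theorem concordance_of_covar_mono_general
    {Ω Ω' : Type*} [MeasurableSpace Ω] [MeasurableSpace Ω']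
    (μ : Measure Ω) (ν : Measure Ω') [IsProbabilityMeasure μ] [IsProbabilityMeasure ν]
    (X Y : Ω → ℝ) (X' Y' : Ω' → ℝ)
    (hX : Measurable X) (hY : Measurable Y) (hX' : Measurable X') (hY' : Measurable Y')
    (C C' : ℝ → ℝ → ℝ)
    (hSklar : ∀ x y, (μ {ω | X ω ≤ x ∧ Y ω ≤ y}).toReal = C (rvCdf μ X x) (rvCdf μ Y y))
    (hSklar' : ∀ x y, (ν {ω | X' ω ≤ x ∧ Y' ω ≤ y}).toReal =
      C' (rvCdf ν X' x) (rvCdf ν Y' y))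
    (hFXcont : Continuous (rvCdf μ X)) (hFX'cont : Continuous (rvCdf ν X'))
    (hFYcont : Continuous (rvCdf μ Y))
    (hYY' : rvCdf μ Y = rvCdf ν Y')
    (hcovar : ∀ α ∈ Ioo (0:ℝ) 1, ∀ β ∈ Ioo (0:ℝ) 1,
      covar μ X Y α β ≤ covar ν X' Y' α β) :
    ∀ u ∈ Ioo (0:ℝ) 1, ∀ v ∈ Ioo (0:ℝ) 1, C u v ≤ C' u v := by
  intro u hu v hv
  have := isProbabilityMeasure_upperTailLaw hX hY hFXcont hu
  have := isProbabilityMeasure_upperTailLaw hX' hY' hFX'cont hu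
  have hcdf := cdf_le_of_qf_cdf_le (fun β hβ => by
    simpa only [covar_eq_qf_cdf_upperTailLaw hX hY hFXcont hu,
      covar_eq_qf_cdf_upperTailLaw hX' hY' hFX'cont hu] using hcovar u hu β hβ)
    (qf (rvCdf μ Y) v)
  rw [cdf_upperTailLaw hX hY hFXcont hu hSklar, cdf_upperTailLaw hX' hY' hFX'cont hu hSklar',
    ← hYY', rvCdf_qf_of_continuous hY hFYcont hv,
    div_le_div_iff_of_pos_right (sub_pos.2 hu.2)] at hcdf
  linarith

/-- if all margins are continuous, F_Y = F_{Y'}, and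
CoVaR_{α,β}(Y|X) ≤ CoVaR_{α,β}(Y'|X') for all α,β ∈ (0,1), then C ⪯ C' on (0,1)². -/
theorem concordance_of_covar_mono
    {Ω Ω' : Type*} [MeasurableSpace Ω] [MeasurableSpace Ω']
    (μ : Measure Ω) (ν : Measure Ω') [IsProbabilityMeasure μ] [IsProbabilityMeasure ν]
    (X Y : Ω → ℝ) (X' Y' : Ω' → ℝ)
    (hX : Measurable X) (hY : Measurable Y) (hX' : Measurable X') (hY' : Measurable Y')
    (C C' : ℝ → ℝ → ℝ)
    (hSklar : ∀ x y, (μ {ω | X ω ≤ x ∧ Y ω ≤ y}).toReal = C (rvCdf μ X x) (rvCdf μ Y y))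
    (hSklar' : ∀ x y, (ν {ω | X' ω ≤ x ∧ Y' ω ≤ y}).toReal =
      C' (rvCdf ν X' x) (rvCdf ν Y' y))
    (hFXcont : Continuous (rvCdf μ X)) (hFX'cont : Continuous (rvCdf ν X'))
    (hFYcont : Continuous (rvCdf μ Y)) (hFY'cont : Continuous (rvCdf ν Y'))
    (hYY' : rvCdf μ Y = rvCdf ν Y')
    (hcovar : ∀ α ∈ Ioo (0:ℝ) 1, ∀ β ∈ Ioo (0:ℝ) 1,
      covar μ X Y α β ≤ covar ν X' Y' α β) :
    ∀ u ∈ Ioo (0:ℝ) 1, ∀ v ∈ Ioo (0:ℝ) 1, C u v ≤ C' u v :=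
  concordance_of_covar_mono_general μ ν X Y X' Y' hX hY hX' hY' C C' hSklar hSklar' hFXcont hFX'cont
    hFYcont hYY' hcovar
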